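/- arXiv:2103.12803 — 5 statements merged into one kernel-verified Lean document; each statement's English description precedes it below -/
import Mathlib

section
/- Let U be a finite-dimensional real inner product space, let γ ∈ [0,1), and let T : U → U be differentiable and satisfy ‖T(u₁) − T(u₂)‖ ≤ γ‖u₁ − u₂‖ for all u₁, u₂ ∈ U. Fix u⋆ ∈ U, let A denote the (Fréchet) derivative of T at u⋆, and let J = I − A where I is the identity map on U. Then ⟨u, J u⟩ ≥ (1 − γ)‖u‖² for all u ∈ U. -/
open scoped InnerProductSpace

/-- If `T` is a differentiable `γ`-contraction (`γ ∈ [0,1)`) on a finite-dimensional real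
inner product space, `A` is the Fréchet derivative of `T` at a point `u⋆`, and
`J = I − A`, then `⟪u, J u⟫ ≥ (1 − γ)‖u‖²` for all `u`. -/
theorem stmt1 {U : Type*} [NormedAddCommGroup U] [InnerProductSpace ℝ U]
    [FiniteDimensional ℝ U] (γ : ℝ) (hγ0 : 0 ≤ γ) (hγ1 : γ < 1)
    (T : U → U) (hTdiff : Differentiable ℝ T)
    (hT : ∀ u₁ u₂ : U, ‖T u₁ - T u₂‖ ≤ γ * ‖u₁ - u₂‖)
    (ustar : U) (A : U →L[ℝ] U) (hA : A = fderiv ℝ T ustar)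
    (J : U →L[ℝ] U) (hJ : J = ContinuousLinearMap.id ℝ U - A) :
    ∀ u : U, ⟪u, J u⟫_ℝ ≥ (1 - γ) * ‖u‖ ^ 2 := by
  have hlip : LipschitzWith γ.toNNReal T := by
    intro x y
    simp only [edist_dist, dist_eq_norm]
    rw [← ENNReal.ofReal_coe_nnreal, ← ENNReal.ofReal_mul (by positivity)]
    refine ENNReal.ofReal_le_ofReal ?_
    calc ‖T x - T y‖ ≤ γ * ‖x - y‖ := hT x y
      _ = (γ.toNNReal : ℝ) * ‖x - y‖ := by rw [Real.coe_toNNReal γ hγ0]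
  have hAnorm : ‖A‖ ≤ γ := by
    rw [hA]
    have := norm_fderiv_le_of_lipschitz ℝ (x₀ := ustar) hlip
    rwa [Real.coe_toNNReal γ hγ0] at this
  intro u
  have h1 : ‖A u‖ ≤ γ * ‖u‖ := by
    calc ‖A u‖ ≤ ‖A‖ * ‖u‖ := A.le_opNorm u
      _ ≤ γ * ‖u‖ := by gcongr
  have h2 : ⟪u, A u⟫_ℝ ≤ γ * ‖u‖ ^ 2 := by
    calc ⟪u, A u⟫_ℝ ≤ ‖u‖ * ‖A u‖ := real_inner_le_norm u (A u)
      _ ≤ ‖u‖ * (γ * ‖u‖) := by gcongr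
      _ = γ * ‖u‖ ^ 2 := by ring
  have : ⟪u, J u⟫_ℝ = ‖u‖ ^ 2 - ⟪u, A u⟫_ℝ := by
    simp [hJ, inner_sub_right, real_inner_self_eq_norm_sq]
  rw [this]
  nlinarith [h2]
end

section
/- Let U be a finite-dimensional real inner product space, let γ ∈ [0,1), and let T : U → U be differentiable and satisfy ‖T(u₁) − T(u₂)‖ ≤ γ‖u₁ − u₂‖ for all u₁, u₂ ∈ U. Fix u⋆ ∈ U, let A denote the (Fréchet) derivative of T at u⋆, and let J = I − A, which is invertible. Then ⟨u, J⁻¹ u⟩ ≥ ((1 − γ)/(1 + γ)²)‖u‖² for all u ∈ U. -/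
open scoped InnerProductSpace

/-- If `T` is a differentiable `γ`-contraction (`γ ∈ [0,1)`) on a finite-dimensional real
inner product space, `A` is the Fréchet derivative of `T` at a point `u⋆`, `J = I − A`
(which is invertible), and `Jinv` is the inverse of `J`, then
`⟪u, J⁻¹ u⟫ ≥ ((1 − γ)/(1 + γ)²)‖u‖²` for all `u`. -/
theorem stmt3 {U : Type*} [NormedAddCommGroup U] [InnerProductSpace ℝ U]
    [FiniteDimensional ℝ U] (γ : ℝ) (hγ0 : 0 ≤ γ) (hγ1 : γ < 1)
    (T : U → U) (hTdiff : Differentiable ℝ T)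
    (hT : ∀ u₁ u₂ : U, ‖T u₁ - T u₂‖ ≤ γ * ‖u₁ - u₂‖)
    (ustar : U) (A : U →L[ℝ] U) (hA : A = fderiv ℝ T ustar)
    (J : U →L[ℝ] U) (hJ : J = ContinuousLinearMap.id ℝ U - A)
    (Jinv : U →L[ℝ] U) (hleft : ∀ u : U, Jinv (J u) = u) (hright : ∀ u : U, J (Jinv u) = u) :
    ∀ u : U, ⟪u, Jinv u⟫_ℝ ≥ ((1 - γ) / (1 + γ) ^ 2) * ‖u‖ ^ 2 := by
  have hAnorm : ‖A‖ ≤ γ := by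
    rw [hA]
    exact norm_fderiv_le_of_lip' ℝ hγ0 (Filter.Eventually.of_forall fun x => hT x ustar)
  intro u
  set v := Jinv u with hv
  have huv : u = v - A v := by
    have := hright u
    rw [hJ] at this
    simpa using this.symm
  have hAv : ‖A v‖ ≤ γ * ‖v‖ := le_trans (A.le_opNorm v)
    (mul_le_mul_of_nonneg_right hAnorm (norm_nonneg v))
  have hip : ⟪u, v⟫_ℝ ≥ (1 - γ) * ‖v‖ ^ 2 := by
    rw [huv, inner_sub_left, real_inner_self_eq_norm_sq]
    have h1 : ⟪A v, v⟫_ℝ ≤ γ * ‖v‖ ^ 2 := by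
      calc ⟪A v, v⟫_ℝ ≤ ‖A v‖ * ‖v‖ := real_inner_le_norm _ _
        _ ≤ γ * ‖v‖ * ‖v‖ := mul_le_mul_of_nonneg_right hAv (norm_nonneg v)
        _ = γ * ‖v‖ ^ 2 := by ring
    nlinarith [sq_nonneg ‖v‖]
  have hnorm : ‖u‖ ≤ (1 + γ) * ‖v‖ := by
    calc ‖u‖ = ‖v - A v‖ := by rw [huv]
      _ ≤ ‖v‖ + ‖A v‖ := norm_sub_le _ _
      _ ≤ ‖v‖ + γ * ‖v‖ := by linarith
      _ = (1 + γ) * ‖v‖ := by ring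
  have h1γ : (0:ℝ) < 1 + γ := by linarith
  have key : (1 - γ) / (1 + γ) ^ 2 * ‖u‖ ^ 2 ≤ (1 - γ) * ‖v‖ ^ 2 := by
    rw [div_mul_eq_mul_div, div_le_iff₀ (by positivity)]
    have h2 : ‖u‖ ^ 2 ≤ ((1 + γ) * ‖v‖) ^ 2 :=
      pow_le_pow_left₀ (norm_nonneg u) hnorm 2
    nlinarith
  linarith [hip]
end

section
/- Let E be a finite-dimensional real inner product space and let γ ∈ [0,1). Let J : E → E be a linear map satisfying ⟨u, J u⟩ ≥ (1 − γ)‖u‖² for all u ∈ E and whose operator norm satisfies ‖J‖ ≤ 1 + γ. Let A : E → E be a self-adjoint linear map and let 0 < λ₋ ≤ λ₊ be real numbers such that λ₋‖x‖² ≤ ⟨x, A x⟩ ≤ λ₊‖x‖² for all x ∈ E. Then ⟨w, J(A w)⟩ ≥ (λ₋ − γλ₊)‖w‖² for all w ∈ E. -/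
open scoped InnerProductSpace

set_option maxHeartbeats 1200000

/-- If `J` is `(1−γ)`-coercive with operator norm at most `1+γ` (`γ ∈ [0,1)`), and `A`
is self-adjoint with `λ₋‖x‖² ≤ ⟪x, A x⟫ ≤ λ₊‖x‖²` for `0 < λ₋ ≤ λ₊`, then
`⟪w, J (A w)⟫ ≥ (λ₋ − γλ₊)‖w‖²` for all `w`. -/
theorem stmt8 {E : Type*} [NormedAddCommGroup E] [InnerProductSpace ℝ E]
    [FiniteDimensional ℝ E] (γ : ℝ) (hγ0 : 0 ≤ γ) (hγ1 : γ < 1)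
    (J : E →L[ℝ] E) (hJcoer : ∀ u : E, ⟪u, J u⟫_ℝ ≥ (1 - γ) * ‖u‖ ^ 2)
    (hJnorm : ‖J‖ ≤ 1 + γ)
    (A : E →L[ℝ] E) (hAsa : ∀ x y : E, ⟪A x, y⟫_ℝ = ⟪x, A y⟫_ℝ)
    (lm lp : ℝ) (hlm : 0 < lm) (hlmp : lm ≤ lp)
    (hlow : ∀ x : E, lm * ‖x‖ ^ 2 ≤ ⟪x, A x⟫_ℝ)
    (hhigh : ∀ x : E, ⟪x, A x⟫_ℝ ≤ lp * ‖x‖ ^ 2) :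
    ∀ w : E, ⟪w, J (A w)⟫_ℝ ≥ (lm - γ * lp) * ‖w‖ ^ 2 := by
  intro w
  by_cases hw : w = 0
  · simp [hw]
  have hN : (0:ℝ) < ‖w‖ ^ 2 := pow_pos (norm_pos_iff.mpr hw) 2
  set N : ℝ := ‖w‖ ^ 2 with hNdef
  set c : ℝ := ⟪w, A w⟫_ℝ with hcdef
  clear_value N c
  have hc1 : lm * N ≤ c := by rw [hNdef, hcdef]; exact hlow w
  have hc2 : c ≤ lp * N := by rw [hNdef, hcdef]; exact hhigh w
  have hc0 : 0 < c := lt_of_lt_of_le (by positivity) hc1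
  -- Step 1: ‖A w‖² ≤ (lp+lm) c − lp lm N  (via B := A − ((lp+lm)/2) id)
  set B : E →L[ℝ] E := A - ((lp+lm)/2) • ContinuousLinearMap.id ℝ E with hBdef
  clear_value B
  have hB : ∀ x : E, B x = A x - ((lp+lm)/2) • x := by
    intro x; simp [hBdef]
  have hBsa : ∀ x y : E, ⟪B x, y⟫_ℝ = ⟪x, B y⟫_ℝ := by
    intro x y
    rw [hB, hB, inner_sub_left, inner_sub_right, real_inner_smul_left,
      real_inner_smul_right, hAsa]
  have hBquad : ∀ x : E, |⟪x, B x⟫_ℝ| ≤ ((lp-lm)/2) * ‖x‖ ^ 2 := by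
    intro x
    rw [hB, inner_sub_right, real_inner_smul_right, real_inner_self_eq_norm_sq]
    have h1 := hlow x
    have h2 := hhigh x
    rw [abs_le]; constructor <;> nlinarith
  have hpol : ∀ x y : E, ⟪x, B y⟫_ℝ ≤ ((lp-lm)/4) * (‖x‖ ^ 2 + ‖y‖ ^ 2) := by
    intro x y
    have hyx : ⟪y, B x⟫_ℝ = ⟪x, B y⟫_ℝ := by
      rw [real_inner_comm (B x) y, hBsa]
    have h1 := (abs_le.mp (hBquad (x+y))).2
    have h2 := (abs_le.mp (hBquad (x-y))).1
    have e1 : ⟪x+y, B (x+y)⟫_ℝ = ⟪x, B x⟫_ℝ + 2 * ⟪x, B y⟫_ℝ + ⟪y, B y⟫_ℝ := by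
      rw [map_add, inner_add_left, inner_add_right, inner_add_right]
      linarith
    have e2 : ⟪x-y, B (x-y)⟫_ℝ = ⟪x, B x⟫_ℝ - 2 * ⟪x, B y⟫_ℝ + ⟪y, B y⟫_ℝ := by
      rw [map_sub, inner_sub_left, inner_sub_right, inner_sub_right]
      linarith
    have p1 : ‖x+y‖ ^ 2 = ‖x‖ ^ 2 + 2 * ⟪x, y⟫_ℝ + ‖y‖ ^ 2 := norm_add_sq_real x y
    have p2 : ‖x-y‖ ^ 2 = ‖x‖ ^ 2 - 2 * ⟪x, y⟫_ℝ + ‖y‖ ^ 2 := norm_sub_sq_real x y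
    rw [e1, p1] at h1
    rw [e2, p2] at h2
    linarith
  have hBw : ‖B w‖ ≤ ((lp-lm)/2) * ‖w‖ := by
    have key := hpol (‖w‖ • B w) (‖B w‖ • w)
    rw [map_smul, real_inner_smul_left, real_inner_smul_right,
      real_inner_self_eq_norm_sq, norm_smul, norm_smul] at key
    simp only [Real.norm_eq_abs, abs_norm] at key
    have hBw0 : (0:ℝ) ≤ ‖B w‖ := norm_nonneg _
    have hw0 : (0:ℝ) < ‖w‖ := norm_pos_iff.mpr hw
    rcases eq_or_lt_of_le hBw0 with h0 | h0
    · rw [← h0]; exact mul_nonneg (by linarith) (norm_nonneg w)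
    · nlinarith [mul_pos hw0 (mul_pos h0 h0)]
  have hA2 : ‖A w‖ ^ 2 ≤ (lp + lm) * c - lp * lm * N := by
    have h1 : ‖B w‖ ^ 2 ≤ ((lp-lm)/2) ^ 2 * N := by
      have := hBw
      nlinarith [norm_nonneg (B w), norm_nonneg w]
    have h2 : ‖B w‖ ^ 2 = ‖A w‖ ^ 2 - (lp+lm) * c + ((lp+lm)/2) ^ 2 * N := by
      rw [hB, norm_sub_sq_real, real_inner_smul_right, norm_smul]
      rw [real_inner_comm w (A w), ← hcdef]
      simp only [Real.norm_eq_abs]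
      rw [mul_pow, sq_abs, hNdef]
      ring
    nlinarith [h1, h2]
  -- Step 2: the orthogonal decomposition r := N • A w − c • w
  set r : E := N • A w - c • w with hrdef
  clear_value r
  have hwr : ⟪w, r⟫_ℝ = 0 := by
    rw [hrdef, inner_sub_right, real_inner_smul_right, real_inner_smul_right,
      real_inner_self_eq_norm_sq, ← hcdef, ← hNdef]
    ring
  have hr2 : ‖r‖ ^ 2 = N ^ 2 * ‖A w‖ ^ 2 - N * c ^ 2 := by
    rw [hrdef, norm_sub_sq_real, real_inner_smul_left, real_inner_smul_right,
      real_inner_comm w (A w), ← hcdef, norm_smul, norm_smul]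
    simp only [Real.norm_eq_abs]
    rw [mul_pow, mul_pow, sq_abs, sq_abs, ← hNdef]
    ring
  have hr2' : ‖r‖ ^ 2 ≤ N * ((lp * N - c) * (c - lm * N)) := by
    rw [hr2]; nlinarith [hA2, hN]
  -- Step 3: key identity
  have hkey : N * ⟪w, J (A w)⟫_ℝ = c * ⟪w, J w⟫_ℝ + ⟪w, J r⟫_ℝ := by
    have : J r = N • J (A w) - c • J w := by
      rw [hrdef, map_sub, map_smul, map_smul]
    rw [this, inner_sub_right, real_inner_smul_right, real_inner_smul_right]
    ring
  -- Step 4: bound ⟪w, J r⟫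
  set z : E := J r - (1-γ) • r with hzdef
  clear_value z
  have hz2 : ‖z‖ ^ 2 ≤ 4 * γ * ‖r‖ ^ 2 := by
    have h1 : ‖J r‖ ≤ (1+γ) * ‖r‖ :=
      le_trans (J.le_opNorm r) (by nlinarith [norm_nonneg r])
    have h2 : ⟪r, J r⟫_ℝ ≥ (1-γ) * ‖r‖ ^ 2 := hJcoer r
    have h3 : ‖z‖ ^ 2 = ‖J r‖ ^ 2 - 2 * (1-γ) * ⟪r, J r⟫_ℝ + (1-γ) ^ 2 * ‖r‖ ^ 2 := by
      rw [hzdef, norm_sub_sq_real, real_inner_smul_right, norm_smul,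
        real_inner_comm r (J r)]
      simp only [Real.norm_eq_abs]
      rw [mul_pow, sq_abs]
      ring
    have h1' : ‖J r‖ ^ 2 ≤ (1+γ) ^ 2 * ‖r‖ ^ 2 := by
      nlinarith [norm_nonneg (J r), norm_nonneg r, h1]
    have h4 : 0 ≤ (1 - γ) * (⟪r, J r⟫_ℝ - (1-γ) * ‖r‖ ^ 2) :=
      mul_nonneg (by linarith) (by linarith [h2])
    rw [h3]
    nlinarith [h1', h4]
  have hwz : ⟪w, J r⟫_ℝ ≥ -(‖w‖ * ‖z‖) := by
    have : ⟪w, J r⟫_ℝ = ⟪w, z⟫_ℝ := by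
      rw [hzdef, inner_sub_right, real_inner_smul_right, hwr]
      ring
    rw [this]
    have := abs_real_inner_le_norm w z
    cases' abs_le.mp this with h _
    linarith
  -- Step 5: assemble
  have hJw : ⟪w, J w⟫_ℝ ≥ (1-γ) * N := by rw [hNdef]; exact hJcoer w
  have hmain : N * ⟪w, J (A w)⟫_ℝ ≥ (lm - γ * lp) * N ^ 2 := by
    rw [hkey]
    have hcJw : c * ⟪w, J w⟫_ℝ ≥ c * ((1-γ) * N) :=
      mul_le_mul_of_nonneg_left hJw hc0.le
    set s : ℝ := Real.sqrt γ with hsdef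
    have hs2 : s ^ 2 = γ := Real.sq_sqrt hγ0
    have hs0 : 0 ≤ s := Real.sqrt_nonneg γ
    have hwz2 : (‖w‖ * ‖z‖) ^ 2 ≤ 4 * s ^ 2 * (N * ‖r‖ ^ 2) := by
      rw [hs2, hNdef]
      nlinarith [mul_le_mul_of_nonneg_left hz2 (sq_nonneg ‖w‖)]
    have hrr : N * ‖r‖ ^ 2 ≤ N ^ 2 * ((lp * N - c) * (c - lm * N)) := by
      nlinarith [mul_le_mul_of_nonneg_left hr2' hN.le]
    have htt : (‖w‖ * ‖z‖) ^ 2 ≤ 4 * s ^ 2 * (N ^ 2 * ((lp * N - c) * (c - lm * N))) := by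
      nlinarith [hwz2, mul_le_mul_of_nonneg_left hrr (by positivity : (0:ℝ) ≤ 4 * s ^ 2)]
    have ha : 0 ≤ c - lm * N := by linarith
    have hb : 0 ≤ lp * N - c := by linarith
    have ht0 : 0 ≤ ‖w‖ * ‖z‖ := mul_nonneg (norm_nonneg _) (norm_nonneg _)
    have hX0 : 0 ≤ N * (c - lm * N) + s ^ 2 * (N * (lp * N - c)) := by
      have := mul_nonneg hN.le ha
      have := mul_nonneg (sq_nonneg s) (mul_nonneg hN.le hb)
      linarith
    have hXsq : (‖w‖ * ‖z‖) ^ 2 ≤ (N * (c - lm * N) + s ^ 2 * (N * (lp * N - c))) ^ 2 := by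
      nlinarith [htt, sq_nonneg (N * (c - lm * N) - s ^ 2 * (N * (lp * N - c)))]
    have hfin : ‖w‖ * ‖z‖ ≤ N * (c - lm * N) + γ * (N * (lp * N - c)) := by
      rw [← hs2]
      nlinarith [hXsq, hX0, ht0]
    nlinarith [hcJw, hwz, hfin]
  nlinarith [hN, hmain]
end

section
/- Let γ ∈ [0,1), let M be a p × m real matrix with MᵀM invertible (full column rank), and let J be an invertible m × m real matrix satisfying ⟨u, J u⟩ ≥ (1 − γ)‖u‖² for all u ∈ ℝᵐ and whose ℓ² operator norm satisfies ‖J‖ ≤ 1 + γ. Let λ₊ and λ₋ denote the maximum and minimum eigenvalues of (MᵀM)⁻¹ (both positive since MᵀM is symmetric positive definite). Then for every v ∈ ℝᵐ, ⟨M J⁻¹ v, M v⟩ ≥ (λ₋ − γλ₊)‖MᵀM J⁻¹ v‖². -/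
open Matrix
open scoped InnerProductSpace

lemma aux_mul {a b c : ℕ} (A : Matrix (Fin a) (Fin b) ℝ) (B : Matrix (Fin b) (Fin c) ℝ)
    (x : EuclideanSpace ℝ (Fin c)) :
    Matrix.toEuclideanLin (A * B) x = Matrix.toEuclideanLin A (Matrix.toEuclideanLin B x) := by
  simp [Matrix.toEuclideanLin_apply, Matrix.mulVec_mulVec]

lemma aux_one {a : ℕ} (x : EuclideanSpace ℝ (Fin a)) :
    Matrix.toEuclideanLin (1 : Matrix (Fin a) (Fin a) ℝ) x = x := by
  simp [Matrix.toEuclideanLin_apply]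

lemma aux_adj {a b : ℕ} (A : Matrix (Fin a) (Fin b) ℝ) (x : EuclideanSpace ℝ (Fin b))
    (y : EuclideanSpace ℝ (Fin a)) :
    ⟪Matrix.toEuclideanLin A x, y⟫_ℝ = ⟪x, Matrix.toEuclideanLin Aᵀ y⟫_ℝ := by
  have h : Aᵀ = Aᴴ := by rw [Matrix.conjTranspose_eq_transpose_of_trivial]
  rw [h, Matrix.toEuclideanLin_conjTranspose_eq_adjoint, LinearMap.adjoint_inner_right]

lemma aux_spec {n : ℕ} {A : Matrix (Fin n) (Fin n) ℝ} (hA : A.IsHermitian) (c r : ℝ) (hr : 0 ≤ r)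
    (hev : ∀ i, |hA.eigenvalues i - c| ≤ r) (w : EuclideanSpace ℝ (Fin n)) :
    ‖Matrix.toEuclideanLin A w - c • w‖ ≤ r * ‖w‖ := by
  set b := hA.eigenvectorBasis with hb
  set T := Matrix.toEuclideanLin A with hT
  have hAt : Aᵀ = A := by
    rw [← Matrix.conjTranspose_eq_transpose_of_trivial]; exact hA
  have hTb : ∀ i, T (b i) = hA.eigenvalues i • b i := by
    intro i
    have h := hA.mulVec_eigenvectorBasis i
    rw [hT, Matrix.toEuclideanLin_apply]
    show (WithLp.equiv 2 _).symm (A *ᵥ ⇑(b i)) = _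
    rw [h]; rfl
  have key : ∀ i, b.repr (T w - c • w) i = (hA.eigenvalues i - c) * b.repr w i := by
    intro i
    rw [map_sub, _root_.map_smul]
    have : ∀ (x : EuclideanSpace ℝ (Fin n)), b.repr x i = ⟪b i, x⟫_ℝ := fun x =>
      b.repr_apply_apply x i
    show b.repr (T w) i - (c • b.repr w) i = _
    rw [this, this]
    have hadj : ⟪b i, T w⟫_ℝ = ⟪T (b i), w⟫_ℝ := by
      rw [hT, aux_adj, hAt]
    rw [hadj, hTb i, real_inner_smul_left]
    show _ - c * b.repr w i = _
    rw [this]; ring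
  have h1 : ‖T w - c • w‖ = Real.sqrt (∑ i, ‖b.repr (T w - c • w) i‖ ^ 2) := by
    rw [← b.repr.norm_map (T w - c • w), EuclideanSpace.norm_eq]
  have h2 : ‖w‖ = Real.sqrt (∑ i, ‖b.repr w i‖ ^ 2) := by
    rw [← b.repr.norm_map w, EuclideanSpace.norm_eq]
  rw [h1, h2, ← Real.sqrt_sq hr, ← Real.sqrt_mul (sq_nonneg r)]
  apply Real.sqrt_le_sqrt
  rw [Finset.mul_sum]
  apply Finset.sum_le_sum
  intro i _
  rw [key i]
  have : ‖(hA.eigenvalues i - c) * b.repr w i‖ ^ 2 =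
      |hA.eigenvalues i - c| ^ 2 * ‖b.repr w i‖ ^ 2 := by
    rw [norm_mul, mul_pow, Real.norm_eq_abs]
  rw [this]
  gcongr
  exact hev i

/-- Key estimate for Jacobian-free backpropagation: if `M` has full column rank,
`J` is invertible, `(1−γ)`-coercive and has `ℓ²` operator norm at most `1+γ`
(`γ ∈ [0,1)`), and `λ₊, λ₋` are the maximum and minimum eigenvalues of `(MᵀM)⁻¹`
(both positive), then `⟪M J⁻¹ v, M v⟫ ≥ (λ₋ − γλ₊)‖MᵀM J⁻¹ v‖²` for every `v`. -/
theorem stmt9 {p m : ℕ} (γ : ℝ) (hγ0 : 0 ≤ γ) (hγ1 : γ < 1)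
    (M : Matrix (Fin p) (Fin m) ℝ) (hM : IsUnit (Mᵀ * M))
    (J : Matrix (Fin m) (Fin m) ℝ) (hJ : IsUnit J)
    (hJcoer : ∀ u : EuclideanSpace ℝ (Fin m),
      ⟪u, Matrix.toEuclideanCLM (𝕜 := ℝ) J u⟫_ℝ ≥ (1 - γ) * ‖u‖ ^ 2)
    (hJnorm : ‖Matrix.toEuclideanCLM (𝕜 := ℝ) J‖ ≤ 1 + γ)
    (hH : ((Mᵀ * M)⁻¹).IsHermitian)
    (lp lm : ℝ) (hlm : 0 < lm)
    (hlp : IsGreatest (Set.range hH.eigenvalues) lp)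
    (hlm' : IsLeast (Set.range hH.eigenvalues) lm) :
    ∀ v : EuclideanSpace ℝ (Fin m),
      ⟪Matrix.toEuclideanLin (M * J⁻¹) v, Matrix.toEuclideanLin M v⟫_ℝ ≥
        (lm - γ * lp) * ‖Matrix.toEuclideanLin (Mᵀ * M * J⁻¹) v‖ ^ 2 := by
  intro v
  have hMdet : IsUnit (Mᵀ * M).det := (Matrix.isUnit_iff_isUnit_det _).mp hM
  have hJdet : IsUnit J.det := (Matrix.isUnit_iff_isUnit_det _).mp hJ
  have hCLM : ∀ x : EuclideanSpace ℝ (Fin m),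
      (Matrix.toEuclideanCLM (𝕜 := ℝ) J) x = Matrix.toEuclideanLin J x := fun _ => rfl
  set w : EuclideanSpace ℝ (Fin m) := Matrix.toEuclideanLin (Mᵀ * M * J⁻¹) v with hw
  have hlmlp : lm ≤ lp := hlm'.2 hlp.1
  set c : ℝ := (lp + lm) / 2 with hcdef
  set r : ℝ := (lp - lm) / 2 with hrdef
  have hr : 0 ≤ r := by rw [hrdef]; linarith
  have hc : 0 ≤ c := by rw [hcdef]; linarith
  -- recover v from w
  have hv : Matrix.toEuclideanLin J (Matrix.toEuclideanLin (Mᵀ * M)⁻¹ w) = v := by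
    rw [hw, ← aux_mul, ← aux_mul]
    have h1 : J * (Mᵀ * M)⁻¹ * (Mᵀ * M * J⁻¹) = 1 := by
      rw [Matrix.mul_assoc J, ← Matrix.mul_assoc (Mᵀ * M)⁻¹,
        Matrix.nonsing_inv_mul _ hMdet, Matrix.one_mul, Matrix.mul_nonsing_inv _ hJdet]
    rw [h1, aux_one]
  -- the left-hand side equals ⟪w, v⟫
  have hL : ⟪w, v⟫_ℝ = ⟪Matrix.toEuclideanLin (M * J⁻¹) v, Matrix.toEuclideanLin M v⟫_ℝ := by
    rw [hw]
    have e1 : Mᵀ * M * J⁻¹ = Mᵀ * (M * J⁻¹) := Matrix.mul_assoc _ _ _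
    rw [e1, aux_mul, aux_adj, Matrix.transpose_transpose]
  -- decomposition of v
  set u : EuclideanSpace ℝ (Fin m) := Matrix.toEuclideanLin (Mᵀ * M)⁻¹ w - c • w with hu
  have hveq : v = c • (Matrix.toEuclideanLin J w) + Matrix.toEuclideanLin J u := by
    rw [hu, map_sub, _root_.map_smul, ← hv]
    abel
  have hsplit : ⟪w, v⟫_ℝ = c * ⟪w, Matrix.toEuclideanLin J w⟫_ℝ +
      ⟪w, Matrix.toEuclideanLin J u⟫_ℝ := by
    rw [hveq, inner_add_right, real_inner_smul_right]
  -- coercivity bound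
  have b1 : ⟪w, Matrix.toEuclideanLin J w⟫_ℝ ≥ (1 - γ) * ‖w‖ ^ 2 := by
    have := hJcoer w
    rwa [hCLM] at this
  have b1' : c * ⟪w, Matrix.toEuclideanLin J w⟫_ℝ ≥ c * ((1 - γ) * ‖w‖ ^ 2) :=
    mul_le_mul_of_nonneg_left b1 hc
  -- spectral bound on u
  have hev : ∀ i, |hH.eigenvalues i - c| ≤ r := by
    intro i
    have h1 : hH.eigenvalues i ≤ lp := hlp.2 ⟨i, rfl⟩
    have h2 : lm ≤ hH.eigenvalues i := hlm'.2 ⟨i, rfl⟩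
    rw [abs_le, hcdef, hrdef]
    constructor <;> linarith
  have hub : ‖u‖ ≤ r * ‖w‖ := aux_spec hH c r hr hev w
  -- bound on the second term
  have hJu : ‖Matrix.toEuclideanLin J u‖ ≤ (1 + γ) * ‖u‖ := by
    calc ‖Matrix.toEuclideanLin J u‖ = ‖(Matrix.toEuclideanCLM (𝕜 := ℝ) J) u‖ := by rw [hCLM]
      _ ≤ ‖Matrix.toEuclideanCLM (𝕜 := ℝ) J‖ * ‖u‖ := ContinuousLinearMap.le_opNorm _ _
      _ ≤ (1 + γ) * ‖u‖ := by
          apply mul_le_mul_of_nonneg_right hJnorm (norm_nonneg _)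
  have b2 : ⟪w, Matrix.toEuclideanLin J u⟫_ℝ ≥ -((1 + γ) * r * ‖w‖ ^ 2) := by
    have h1 : |⟪w, Matrix.toEuclideanLin J u⟫_ℝ| ≤ ‖w‖ * ‖Matrix.toEuclideanLin J u‖ :=
      abs_real_inner_le_norm _ _
    have h2 : ‖w‖ * ‖Matrix.toEuclideanLin J u‖ ≤ ‖w‖ * ((1 + γ) * (r * ‖w‖)) := by
      apply mul_le_mul_of_nonneg_left _ (norm_nonneg w)
      calc ‖Matrix.toEuclideanLin J u‖ ≤ (1 + γ) * ‖u‖ := hJu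
        _ ≤ (1 + γ) * (r * ‖w‖) := by
            apply mul_le_mul_of_nonneg_left hub (by linarith)
    have h3 : -(‖w‖ * ((1 + γ) * (r * ‖w‖))) ≤ ⟪w, Matrix.toEuclideanLin J u⟫_ℝ := by
      have := neg_abs_le ⟪w, Matrix.toEuclideanLin J u⟫_ℝ
      linarith
    have h4 : ‖w‖ * ((1 + γ) * (r * ‖w‖)) = (1 + γ) * r * ‖w‖ ^ 2 := by ring
    linarith [h3, h4.symm ▸ h3]
  -- combine
  have hfin : c * ((1 - γ) * ‖w‖ ^ 2) - (1 + γ) * r * ‖w‖ ^ 2 = (lm - γ * lp) * ‖w‖ ^ 2 := by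
    rw [hcdef, hrdef]; ring
  rw [← hL, hsplit]
  linarith [b1', b2, hfin]
end

section
/- Let γ ∈ [0,1), let M be a p × m real matrix with MᵀM invertible (full column rank), and let J be an invertible m × m real matrix satisfying ⟨u, J u⟩ ≥ (1 − γ)‖u‖² for all u ∈ ℝᵐ and whose ℓ² operator norm satisfies ‖J‖ ≤ 1 + γ. Let λ₊ and λ₋ denote the maximum and minimum eigenvalues of (MᵀM)⁻¹, and assume the conditioning bound λ₋ > γλ₊ (which holds in particular when the condition number of MᵀM is strictly less than 1/γ). Then for every v ∈ ℝᵐ with M J⁻¹ v ≠ 0, one has ⟨M J⁻¹ v, −M v⟩ < 0; that is, −M v is a descent direction with respect to the gradient M J⁻¹ v. -/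
open Matrix
open scoped InnerProductSpace

/-!
Put `x = J⁻¹ v` and `w = MᵀM x`; then `⟪M J⁻¹ v, M v⟫ = ⟪w, J B w⟫` with `B = (MᵀM)⁻¹`.
Write `B = c + D` with `c = (λ₋ + λ₊)/2`. As `B` is self-adjoint, its norm is its spectral
radius, so `‖D‖ ≤ (λ₊ − λ₋)/2`. Coercivity of `J` and `‖J‖ ≤ 1 + γ` give
`⟪w, J B w⟫ ≥ (c (1 − γ) − (1 + γ)(λ₊ − λ₋)/2) ‖w‖² = (λ₋ − γ λ₊) ‖w‖² > 0`.
-/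

variable {E : Type*} [NormedAddCommGroup E] [InnerProductSpace ℝ E]

theorem IsSelfAdjoint.norm_le_of_forall_mem_spectrum_abs_le [CompleteSpace E]
    {T : E →L[ℝ] E} (hT : IsSelfAdjoint T) {r : ℝ} (hr : 0 ≤ r)
    (h : ∀ x ∈ spectrum ℝ T, |x| ≤ r) : ‖T‖ ≤ r := by
  have hρ : spectralRadius ℝ T ≤ ENNReal.ofReal r := by
    refine iSup₂_le fun x hx => ?_
    rw [← ENNReal.ofReal_coe_nnreal, coe_nnnorm, Real.norm_eq_abs]
    exact ENNReal.ofReal_le_ofReal (h x hx)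
  rwa [T.spectralRadius_eq_nnnorm hT, ← ENNReal.ofReal_coe_nnreal, coe_nnnorm,
    ENNReal.ofReal_le_ofReal_iff hr] at hρ

theorem IsSelfAdjoint.norm_sub_algebraMap_midpoint_le [CompleteSpace E]
    {T : E →L[ℝ] E} (hT : IsSelfAdjoint T) {a b : ℝ} (hab : a ≤ b)
    (h : spectrum ℝ T ⊆ Set.Icc a b) :
    ‖T - algebraMap ℝ (E →L[ℝ] E) ((a + b) / 2)‖ ≤ (b - a) / 2 := by
  refine (hT.sub (.algebraMap _ (.all _))).norm_le_of_forall_mem_spectrum_abs_le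
    (by linarith) fun x hx => ?_
  rw [← spectrum.sub_singleton_eq] at hx
  obtain ⟨y, hy, _, rfl, rfl⟩ := hx
  obtain ⟨hay, hyb⟩ := h hy
  exact abs_le.2 ⟨by linarith, by linarith⟩

theorem Matrix.IsHermitian.spectrum_toEuclideanCLM {n : Type*} [Fintype n] [DecidableEq n]
    {B : Matrix n n ℝ} (hB : B.IsHermitian) :
    spectrum ℝ (toEuclideanCLM (𝕜 := ℝ) B) = Set.range hB.eigenvalues := by
  rw [AlgEquiv.spectrum_eq, hB.spectrum_real_eq_range_eigenvalues]

theorem Matrix.IsHermitian.isSelfAdjoint_toEuclideanCLM {n : Type*} [Fintype n] [DecidableEq n]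
    {B : Matrix n n ℝ} (hB : B.IsHermitian) :
    IsSelfAdjoint (toEuclideanCLM (𝕜 := ℝ) B) := hB.isSelfAdjoint.map _

theorem Matrix.inner_toEuclideanLin_toEuclideanLin {n k : Type*} [Fintype n] [DecidableEq n]
    [Fintype k] [DecidableEq k] (M : Matrix k n ℝ) (x y : EuclideanSpace ℝ n) :
    ⟪toEuclideanLin M x, toEuclideanLin M y⟫_ℝ = ⟪toEuclideanLin (Mᵀ * M) x, y⟫_ℝ := by
  rw [← LinearMap.adjoint_inner_left, ← toEuclideanLin_conjTranspose_eq_adjoint]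
  simp [toLpLin_apply, mulVec_mulVec]

theorem ContinuousLinearMap.mul_norm_sq_le_inner_apply_apply {T S : E →L[ℝ] E} {α β c r : ℝ}
    (hT : ∀ u, α * ‖u‖ ^ 2 ≤ ⟪u, T u⟫_ℝ) (hTβ : ‖T‖ ≤ β) (hc : 0 ≤ c)
    (hS : ‖S - algebraMap ℝ (E →L[ℝ] E) c‖ ≤ r) (w : E) :
    (c * α - β * r) * ‖w‖ ^ 2 ≤ ⟪w, T (S w)⟫_ℝ := by
  set D := S - algebraMap ℝ (E →L[ℝ] E) c
  have hSw : S w = c • w + D w := by simp [D, Algebra.algebraMap_eq_smul_one]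
  have hβ : 0 ≤ β := (norm_nonneg T).trans hTβ
  have hTD : ‖T (D w)‖ ≤ β * (r * ‖w‖) :=
    (T.le_of_opNorm_le hTβ _).trans (mul_le_mul_of_nonneg_left (D.le_of_opNorm_le hS w) hβ)
  have hcross : -(‖w‖ * ‖T (D w)‖) ≤ ⟪w, T (D w)⟫_ℝ :=
    neg_le_of_abs_le (abs_real_inner_le_norm _ _)
  have hmain := mul_le_mul_of_nonneg_left (hT w) hc
  rw [hSw, map_add, map_smul, inner_add_right, inner_smul_right]
  nlinarith [norm_nonneg w]

/-- **Descent property of Jacobian-free backpropagation.** If `M` has full column rank,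
`J` is invertible, `(1−γ)`-coercive and has `ℓ²` operator norm at most `1+γ`
(`γ ∈ [0,1)`), `λ₊, λ₋` are the maximum and minimum eigenvalues of `(MᵀM)⁻¹`, and the
conditioning bound `λ₋ > γλ₊` holds, then for every `v` with `M J⁻¹ v ≠ 0` one has
`⟪M J⁻¹ v, −M v⟫ < 0`, i.e. `−M v` is a descent direction for the gradient `M J⁻¹ v`. -/
theorem stmt10 {p m : ℕ} (γ : ℝ) (hγ0 : 0 ≤ γ) (hγ1 : γ < 1)
    (M : Matrix (Fin p) (Fin m) ℝ) (hM : IsUnit (Mᵀ * M))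
    (J : Matrix (Fin m) (Fin m) ℝ) (hJ : IsUnit J)
    (hJcoer : ∀ u : EuclideanSpace ℝ (Fin m),
      ⟪u, Matrix.toEuclideanCLM (𝕜 := ℝ) J u⟫_ℝ ≥ (1 - γ) * ‖u‖ ^ 2)
    (hJnorm : ‖Matrix.toEuclideanCLM (𝕜 := ℝ) J‖ ≤ 1 + γ)
    (hH : ((Mᵀ * M)⁻¹).IsHermitian)
    (lp lm : ℝ)
    (hlp : IsGreatest (Set.range hH.eigenvalues) lp)
    (hlm' : IsLeast (Set.range hH.eigenvalues) lm)
    (hcond : lm > γ * lp) :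
    ∀ v : EuclideanSpace ℝ (Fin m),
      Matrix.toEuclideanLin (M * J⁻¹) v ≠ 0 →
        ⟪Matrix.toEuclideanLin (M * J⁻¹) v, -(Matrix.toEuclideanLin M v)⟫_ℝ < 0 := by
  intro v hv
  set A := Mᵀ * M
  set x := toEuclideanLin J⁻¹ v
  set w := toEuclideanLin A x
  have hJx : toEuclideanCLM (𝕜 := ℝ) J x = v := by
    simp [x, toLpLin_apply, mulVec_mulVec, mul_nonsing_inv J ((isUnit_iff_isUnit_det J).mp hJ)]
  have hMx : toEuclideanLin (M * J⁻¹) v = toEuclideanLin M x := by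
    simp [x, toLpLin_apply, mulVec_mulVec]
  have hBw : toEuclideanCLM (𝕜 := ℝ) A⁻¹ w = x := by
    simp [w, toLpLin_apply, mulVec_mulVec, nonsing_inv_mul A ((isUnit_iff_isUnit_det A).mp hM)]
  have hw : w ≠ 0 := by
    rintro hw0
    have hMx0 : ⟪toEuclideanLin M x, toEuclideanLin M x⟫_ℝ = 0 := by
      rw [inner_toEuclideanLin_toEuclideanLin]
      change ⟪w, x⟫_ℝ = 0
      rw [hw0, inner_zero_left]
    exact hv (hMx ▸ inner_self_eq_zero.1 hMx0)
  have hlmlp : lm ≤ lp := hlm'.2 hlp.1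
  have hspec : spectrum ℝ (toEuclideanCLM (𝕜 := ℝ) A⁻¹) ⊆ Set.Icc lm lp := by
    rw [hH.spectrum_toEuclideanCLM]
    rintro _ ⟨i, rfl⟩
    exact ⟨hlm'.2 ⟨i, rfl⟩, hlp.2 ⟨i, rfl⟩⟩
  have hlp_pos : 0 < lp := by nlinarith
  have hmid : 0 ≤ (lm + lp) / 2 := by nlinarith
  have hbound := ContinuousLinearMap.mul_norm_sq_le_inner_apply_apply (fun u => (hJcoer u).le)
    hJnorm hmid (hH.isSelfAdjoint_toEuclideanCLM.norm_sub_algebraMap_midpoint_le hlmlp hspec) w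
  rw [hMx, inner_neg_right, neg_lt_zero, ← hJx, inner_toEuclideanLin_toEuclideanLin]
  calc (0 : ℝ) < (lm - γ * lp) * ‖w‖ ^ 2 := mul_pos (by linarith) (by positivity)
    _ = ((lm + lp) / 2 * (1 - γ) - (1 + γ) * ((lp - lm) / 2)) * ‖w‖ ^ 2 := by ring
    _ ≤ ⟪w, toEuclideanCLM (𝕜 := ℝ) J (toEuclideanCLM (𝕜 := ℝ) A⁻¹ w)⟫_ℝ := hbound
    _ = ⟪w, toEuclideanCLM (𝕜 := ℝ) J x⟫_ℝ := by rw [hBw]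
end
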